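/- The inequality ∫₀^{2π} |D_α P(e^{iθ})|² dθ ≤ n²|α|² ∫₀^{2π} |P(e^{iθ})|² dθ fails for P(z) = (1 - iz)^n and α = i, for every n ≥ 2; specifically, for this choice, ∫₀^{2π}|D_α P(e^{iθ})|² dθ = 8πn²·C(2n-2, n-1) and n²|α|²∫₀^{2π}|P(e^{iθ})|² dθ = 2πn²·C(2n,n), and 8πn²·C(2n-2,n-1) > 2πn²·C(2n,n) since 4·C(2n-2,n-1) > C(2n,n), which is equivalent to 4n > 2(2n-1) and holds for all n ≥ 1. -/

import Mathlib

open Complex Real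
open Finset


lemma integral_exp_diag (k j : ℕ) :
    ∫ θ in (0:ℝ)..(2*π), Complex.exp ((((k:ℂ) - j) * I) * θ) =
      if k = j then (2*π:ℂ) else 0 := by
  split_ifs with h
  · subst h
    simp [Complex.ofReal_mul]
  · have hc : ((k:ℂ) - j) * I ≠ 0 := by
      refine mul_ne_zero (sub_ne_zero.mpr ?_) Complex.I_ne_zero
      exact_mod_cast fun hh => h (Nat.cast_injective hh)
    rw [integral_exp_mul_complex hc]
    have h2 : (((k:ℂ) - j) * I) * ((2*π:ℝ):ℂ) = ((k:ℤ) - (j:ℤ)) * (2*π*I) := by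
      push_cast; ring
    rw [h2, show ((k:ℤ):ℂ) - ((j:ℤ):ℂ) = (((k:ℤ) - j : ℤ):ℂ) by push_cast; ring,
      Complex.exp_int_mul_two_pi_mul_I]
    simp

lemma pointwise (m : ℕ) (θ : ℝ) :
    (((‖(1 - I * Complex.exp (I * θ))‖)^(2*m) : ℝ) : ℂ) =
      ∑ k ∈ range (m+1), ∑ j ∈ range (m+1),
        ((m.choose k : ℂ) * (m.choose j) * ((-I)^k * I^j)) *
          Complex.exp ((((k:ℂ) - j) * I) * θ) := by
  set z := Complex.exp (I * θ) with hzdef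
  have hz : (starRingEnd ℂ) z = Complex.exp (-(I * θ)) := by
    rw [hzdef, ← Complex.exp_conj]
    congr 1
    simp [Complex.conj_ofReal]
  have hw2 : (((‖(1 - I * z)‖)^(2*m) : ℝ) : ℂ) =
      (1 - I*z)^m * ((starRingEnd ℂ) (1 - I*z))^m := by
    push_cast
    rw [pow_mul, ← mul_pow]
    congr 1
    rw [Complex.mul_conj]
    norm_cast
    rw [Complex.sq_norm]
  rw [hw2]
  have hwm : (1 - I*z)^m = ∑ k ∈ range (m+1),
      ((m.choose k : ℂ) * (-I)^k) * z^k := by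
    rw [show (1 : ℂ) - I*z = (-(I*z)) + 1 by ring, add_pow]
    exact Finset.sum_congr rfl fun k _ => by ring
  have hcwm : ((starRingEnd ℂ) (1 - I*z))^m = ∑ j ∈ range (m+1),
      ((m.choose j : ℂ) * I^j) * Complex.exp (-(I*θ))^j := by
    have : (starRingEnd ℂ) (1 - I*z) = (I * Complex.exp (-(I*θ))) + 1 := by
      rw [map_sub, map_mul, map_one, Complex.conj_I, hz]; ring
    rw [this, add_pow]
    exact Finset.sum_congr rfl fun j _ => by ring
  rw [hwm, hcwm, Finset.sum_mul_sum]
  refine Finset.sum_congr rfl fun k _ => Finset.sum_congr rfl fun j _ => ?_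
  have h1 : z^k = Complex.exp ((k:ℂ) * (I*θ)) := by
    rw [hzdef, ← Complex.exp_nat_mul]
  have h2 : Complex.exp (-(I*θ))^j = Complex.exp ((j:ℂ) * (-(I*θ))) := by
    rw [← Complex.exp_nat_mul]
  have h3 : ((((k:ℂ) - j) * I) * (θ:ℂ)) = (k:ℂ)*(I*θ) + (j:ℂ)*(-(I*θ)) := by ring
  rw [h1, h2, h3, Complex.exp_add]
  ring

lemma sum_choose_sq (m : ℕ) : ∑ k ∈ range (m+1), m.choose k * m.choose k = (2*m).choose m := by
  rw [two_mul, Nat.add_choose_eq, Finset.Nat.sum_antidiagonal_eq_sum_range_succ_mk]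
  exact Finset.sum_congr rfl fun k hk => by
    rw [Nat.choose_symm (by simpa using Nat.lt_succ_iff.mp (mem_range.mp hk))]

set_option maxHeartbeats 1000000 in
lemma key (m : ℕ) :
    (∫ θ in (0:ℝ)..(2*π), (‖(1 - I * Complex.exp (I * θ))‖)^(2*m))
      = 2*π*((2*m).choose m) := by
  have hcoe : ((∫ θ in (0:ℝ)..(2*π), (‖(1 - I * Complex.exp (I * θ))‖)^(2*m) : ℝ) : ℂ)
      = ∫ θ in (0:ℝ)..(2*π), (((‖(1 - I * Complex.exp (I * θ))‖)^(2*m) : ℝ) : ℂ) := by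
    rw [intervalIntegral.integral_ofReal]
  have step1 : (∫ θ in (0:ℝ)..(2*π), (((‖(1 - I * Complex.exp (I * θ))‖)^(2*m) : ℝ) : ℂ))
      = ∫ θ in (0:ℝ)..(2*π), ∑ k ∈ range (m+1), ∑ j ∈ range (m+1),
        ((m.choose k : ℂ) * (m.choose j) * ((-I)^k * I^j)) *
          Complex.exp ((((k:ℂ) - j) * I) * θ) :=
    intervalIntegral.integral_congr (fun θ _ => pointwise m θ)
  have step2 : (∫ θ in (0:ℝ)..(2*π), ∑ k ∈ range (m+1), ∑ j ∈ range (m+1),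
        ((m.choose k : ℂ) * (m.choose j) * ((-I)^k * I^j)) *
          Complex.exp ((((k:ℂ) - j) * I) * θ))
      = ∑ k ∈ range (m+1), ∑ j ∈ range (m+1),
        ((m.choose k : ℂ) * (m.choose j) * ((-I)^k * I^j)) *
          (∫ θ in (0:ℝ)..(2*π), Complex.exp ((((k:ℂ) - j) * I) * θ)) := by
    have hcont : ∀ (c A : ℂ), IntervalIntegrable (fun θ : ℝ => c * Complex.exp (A * θ))
        MeasureTheory.volume 0 (2*π) :=
      fun c A => Continuous.intervalIntegrable (by fun_prop) _ _
    rw [intervalIntegral.integral_finset_sum (fun k _ =>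
      Continuous.intervalIntegrable (by fun_prop) _ _)]
    refine Finset.sum_congr rfl fun k _ => ?_
    rw [intervalIntegral.integral_finset_sum (fun j _ => hcont _ _)]
    exact Finset.sum_congr rfl fun j _ => intervalIntegral.integral_const_mul _ _
  have step3 : (∑ k ∈ range (m+1), ∑ j ∈ range (m+1),
        ((m.choose k : ℂ) * (m.choose j) * ((-I)^k * I^j)) *
          (∫ θ in (0:ℝ)..(2*π), Complex.exp ((((k:ℂ) - j) * I) * θ)))
      = 2*π*((2*m).choose m) := by
    have hdiag : ∀ k ∈ range (m+1), (∑ j ∈ range (m+1),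
        ((m.choose k : ℂ) * (m.choose j) * ((-I)^k * I^j)) *
          (∫ θ in (0:ℝ)..(2*π), Complex.exp ((((k:ℂ) - j) * I) * θ)))
        = ((m.choose k : ℂ) * (m.choose k)) * (2*π) := by
      intro k hk
      have h2 : ∀ j ∈ range (m+1),
          ((m.choose k : ℂ) * (m.choose j) * ((-I)^k * I^j)) *
            (∫ θ in (0:ℝ)..(2*π), Complex.exp ((((k:ℂ) - j) * I) * θ))
          = ((m.choose k : ℂ) * (m.choose j) * ((-I)^k * I^j)) *
              (if k = j then (2*π:ℂ) else 0) := fun j _ => by rw [integral_exp_diag]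
      rw [Finset.sum_congr rfl h2,
        Finset.sum_eq_single k
          (fun j _ hj => by rw [if_neg (fun h => hj h.symm), mul_zero])
          (fun hk' => absurd hk hk')]
      have hIk : ((-I)^k * I^k : ℂ) = 1 := by rw [← mul_pow]; norm_num
      rw [if_pos rfl, hIk]; ring
    rw [Finset.sum_congr rfl hdiag, ← Finset.sum_mul]
    have hs : (∑ k ∈ range (m+1), ((m.choose k : ℂ) * (m.choose k)))
        = ((2*m).choose m : ℂ) := by
      rw [← sum_choose_sq]; push_cast; ring
    rw [hs]; push_cast; ring
  have := hcoe.trans ((step1.trans step2).trans step3)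
  exact_mod_cast this

lemma part3 : ∀ m : ℕ, 1 ≤ m → 4 * ((2 * m - 2).choose (m - 1)) > (2 * m).choose m := by
  intro m hm
  obtain ⟨k, rfl⟩ : ∃ k, m = k + 1 := ⟨m - 1, by omega⟩
  have h : (2*(k+1)-2) = 2*k ∧ (k+1-1) = k := by omega
  rw [h.1, h.2]
  have hc := Nat.succ_mul_centralBinom_succ k
  have hpos : 0 < Nat.centralBinom k := Nat.centralBinom_pos k
  unfold Nat.centralBinom at hc hpos
  have : (k+1) * (2*(k+1)).choose (k+1) < (k+1) * (4 * (2*k).choose k) := by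
    rw [show 2*(k+1) = 2*k+1+1 by ring] at hc ⊢
    rw [hc]; nlinarith
  exact lt_of_mul_lt_mul_left this (Nat.zero_le _)

theorem inequality_four_fails (n : ℕ) (hn : 2 ≤ n) :
    (∫ θ in (0:ℝ)..(2 * π),
        (‖((n : ℂ) * (1 - I * Complex.exp (I * θ)) ^ n +
          (I - Complex.exp (I * θ)) *
            deriv (fun w : ℂ => (1 - I * w) ^ n) (Complex.exp (I * θ)))‖) ^ 2)
      = 8 * π * n ^ 2 * ((2 * n - 2).choose (n - 1)) ∧
    (n : ℝ) ^ 2 * ‖I‖ ^ 2 *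
        (∫ θ in (0:ℝ)..(2 * π), (‖((1 - I * Complex.exp (I * θ)) ^ n)‖) ^ 2)
      = 2 * π * n ^ 2 * ((2 * n).choose n) ∧
    ∀ m : ℕ, 1 ≤ m → 4 * ((2 * m - 2).choose (m - 1)) > (2 * m).choose m := by
  have hd : ∀ z : ℂ, deriv (fun w : ℂ => (1 - I * w) ^ n) z
      = (n : ℂ) * (1 - I * z) ^ (n - 1) * (-I) := by
    intro z
    have h0 : HasDerivAt (fun w : ℂ => 1 - I * w) (-(I * 1)) z :=
      ((hasDerivAt_id z).const_mul I).const_sub 1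
    have h1 := h0.fun_pow n
    simpa using h1.deriv
  refine ⟨?_, ?_, part3⟩
  · have hsimp : ∀ θ : ℝ,
        (‖((n : ℂ) * (1 - I * Complex.exp (I * θ)) ^ n +
          (I - Complex.exp (I * θ)) *
            deriv (fun w : ℂ => (1 - I * w) ^ n) (Complex.exp (I * θ)))‖) ^ 2
        = 4 * (n:ℝ)^2 * (‖(1 - I * Complex.exp (I * θ))‖)^(2*(n-1)) := by
      intro θ
      set z := Complex.exp (I * θ) with hz
      rw [hd z]
      have hpow : (1 - I*z)^n = (1 - I*z)^(n-1) * (1 - I*z) := by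
        conv_lhs => rw [show n = (n-1) + 1 by omega]
        rw [pow_succ]
      have hval : (n:ℂ) * (1 - I*z)^n + (I - z) * ((n:ℂ) * (1 - I*z)^(n-1) * (-I))
          = 2 * n * (1 - I*z)^(n-1) := by
        rw [hpow]
        linear_combination (-(n:ℂ) * (1 - I*z)^(n-1)) * Complex.I_sq
      rw [hval, norm_mul, norm_mul, Complex.norm_two, Complex.norm_natCast, norm_pow]
      rw [mul_pow, mul_pow, ← pow_mul]
      ring
    have e1 : (∫ θ in (0:ℝ)..(2 * π),
        (‖((n : ℂ) * (1 - I * Complex.exp (I * θ)) ^ n +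
          (I - Complex.exp (I * θ)) *
            deriv (fun w : ℂ => (1 - I * w) ^ n) (Complex.exp (I * θ)))‖) ^ 2)
        = ∫ θ in (0:ℝ)..(2 * π),
            4 * (n:ℝ)^2 * (‖(1 - I * Complex.exp (I * θ))‖)^(2*(n-1)) :=
      intervalIntegral.integral_congr (fun θ _ => hsimp θ)
    rw [e1, intervalIntegral.integral_const_mul, key (n-1),
      show 2*(n-1) = 2*n - 2 by omega]
    ring
  · have hsimp2 : ∀ θ : ℝ, (‖((1 - I * Complex.exp (I * θ)) ^ n)‖) ^ 2
        = (‖(1 - I * Complex.exp (I * θ))‖)^(2*n) := by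
      intro θ
      rw [norm_pow, ← pow_mul, Nat.mul_comm]
    have e2 : (∫ θ in (0:ℝ)..(2 * π), (‖((1 - I * Complex.exp (I * θ)) ^ n)‖) ^ 2)
        = ∫ θ in (0:ℝ)..(2 * π), (‖(1 - I * Complex.exp (I * θ))‖)^(2*n) :=
      intervalIntegral.integral_congr (fun θ _ => hsimp2 θ)
    rw [e2, key n, Complex.norm_I]
    ring
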